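/- arXiv:1507.04032 — 2 statements merged into one kernel-verified Lean document; each statement's English description precedes it below -/
import Mathlib

section
/- Let A be an n×n complex matrix such that |A e| ≥ |e| for every vector e in ℂⁿ. If |det A| ≤ δ for some δ ≥ 0, then the operator norm of A satisfies ‖A‖ ≤ δ. -/
open Matrix

/-- The operator norm on `n × n` complex matrices induced by the Euclidean norm. -/
noncomputable def matNorm {n : ℕ} (M : Matrix (Fin n) (Fin n) ℂ) : ℝ :=
  ‖(Matrix.toEuclideanCLM (𝕜 := ℂ) M : EuclideanSpace ℂ (Fin n) →L[ℂ] EuclideanSpace ℂ (Fin n))‖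

/-- The Euclidean norm of a vector in `ℂⁿ`. -/
noncomputable def vecNorm {n : ℕ} (v : Fin n → ℂ) : ℝ :=
  ‖(WithLp.equiv 2 (Fin n → ℂ)).symm v‖

lemma vecNorm_sq {n : ℕ} (v : Fin n → ℂ) :
    ((vecNorm v : ℝ) : ℂ) ^ 2 = star v ⬝ᵥ v := by
  rw [vecNorm]
  rw [show ((‖(WithLp.equiv 2 (Fin n → ℂ)).symm v‖ : ℝ) : ℂ) ^ 2
      = (‖(WithLp.equiv 2 (Fin n → ℂ)).symm v‖ ^ 2 : ℝ) by push_cast; ring]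
  rw [EuclideanSpace.norm_eq]
  rw [Real.sq_sqrt (by positivity)]
  push_cast
  rw [dotProduct]
  congr 1
  ext i
  simp only [Pi.star_apply, Complex.star_def]
  rw [Complex.conj_mul']
  rfl

lemma vecNorm_nonneg {n : ℕ} (v : Fin n → ℂ) : 0 ≤ vecNorm v := norm_nonneg _

lemma dot_B {n : ℕ} (A : Matrix (Fin n) (Fin n) ℂ) (e : Fin n → ℂ) :
    star e ⬝ᵥ ((Aᴴ * A) *ᵥ e) = ((vecNorm (A *ᵥ e) : ℝ) : ℂ) ^ 2 := by
  rw [vecNorm_sq, ← Matrix.mulVec_mulVec, Matrix.dotProduct_mulVec, ← Matrix.star_mulVec]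

/-- If `|A e| ≥ |e|` for all `e` and `|det A| ≤ δ` with `δ ≥ 0`, then `‖A‖ ≤ δ`. -/
theorem stmt0 {n : ℕ} (A : Matrix (Fin n) (Fin n) ℂ) (δ : ℝ) (hδ : 0 ≤ δ)
    (hA : ∀ e : Fin n → ℂ, vecNorm e ≤ vecNorm (A.mulVec e))
    (hdet : ‖A.det‖ ≤ δ) :
    matNorm A ≤ δ := by
  classical
  have hB : (Aᴴ * A).IsHermitian := Matrix.isHermitian_conjTranspose_mul_self A
  have heig : ∀ i, hB.eigenvalues i
      = vecNorm (A *ᵥ (WithLp.equiv 2 (Fin n → ℂ) (hB.eigenvectorBasis i))) ^ 2 := by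
    intro i
    rw [hB.eigenvalues_eq i, dot_B]
    simp [← Complex.ofReal_pow]
  have hunit : ∀ i, vecNorm (WithLp.equiv 2 (Fin n → ℂ) (hB.eigenvectorBasis i)) = 1 := by
    intro i
    have h1 : ‖hB.eigenvectorBasis i‖ = 1 := hB.eigenvectorBasis.orthonormal.1 i
    rw [vecNorm, Equiv.symm_apply_apply]
    exact h1
  have key1 : ∀ i, 1 ≤ hB.eigenvalues i := by
    intro i
    rw [heig i]
    have := hA (WithLp.equiv 2 (Fin n → ℂ) (hB.eigenvectorBasis i))
    rw [hunit i] at this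
    nlinarith [vecNorm_nonneg (A *ᵥ (WithLp.equiv 2 (Fin n → ℂ) (hB.eigenvectorBasis i)))]
  have key2 : ∏ i, hB.eigenvalues i = ‖A.det‖ ^ 2 := by
    have h1 : ((∏ i, hB.eigenvalues i : ℝ) : ℂ) = (Aᴴ * A).det := by
      rw [hB.det_eq_prod_eigenvalues]; push_cast; rfl
    have h2 : (Aᴴ * A).det = ((‖A.det‖ ^ 2 : ℝ) : ℂ) := by
      rw [Matrix.det_mul, Matrix.det_conjTranspose, Complex.star_def,
        ← Complex.normSq_eq_conj_mul_self, Complex.normSq_eq_norm_sq]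
    exact_mod_cast h1.trans h2
  have key3 : ∀ i, hB.eigenvalues i ≤ δ ^ 2 := by
    intro i
    have herase : (1 : ℝ) ≤ ∏ j ∈ Finset.univ.erase i, hB.eigenvalues j := by
      calc (1 : ℝ) = ∏ _j ∈ Finset.univ.erase i, (1 : ℝ) := by simp
        _ ≤ ∏ j ∈ Finset.univ.erase i, hB.eigenvalues j :=
          Finset.prod_le_prod (by intros; norm_num) (fun j _ => key1 j)
    calc hB.eigenvalues i = hB.eigenvalues i * 1 := by ring
      _ ≤ hB.eigenvalues i * ∏ j ∈ Finset.univ.erase i, hB.eigenvalues j :=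
          mul_le_mul_of_nonneg_left herase (le_trans zero_le_one (key1 i))
      _ = ∏ j, hB.eigenvalues j := Finset.mul_prod_erase _ _ (Finset.mem_univ i)
      _ = ‖A.det‖ ^ 2 := key2
      _ ≤ δ ^ 2 := pow_le_pow_left₀ (norm_nonneg _) hdet 2
  have main : ∀ e : Fin n → ℂ, vecNorm (A *ᵥ e) ≤ δ * vecNorm e := by
    intro e
    obtain ⟨f, hf⟩ : ∃ f, f = star (hB.eigenvectorUnitary : Matrix (Fin n) (Fin n) ℂ) *ᵥ e :=
      ⟨_, rfl⟩
    have hsf : star f = star e ᵥ* (hB.eigenvectorUnitary : Matrix (Fin n) (Fin n) ℂ) := by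
      rw [hf, Matrix.star_mulVec, Matrix.star_eq_conjTranspose,
        Matrix.conjTranspose_conjTranspose]
    have hUU : (hB.eigenvectorUnitary : Matrix (Fin n) (Fin n) ℂ)
        * star (hB.eigenvectorUnitary : Matrix (Fin n) (Fin n) ℂ) = 1 :=
      (Matrix.mem_unitaryGroup_iff).mp hB.eigenvectorUnitary.2
    have h1 : star e ⬝ᵥ ((Aᴴ * A) *ᵥ e)
        = star f ⬝ᵥ (diagonal (RCLike.ofReal ∘ hB.eigenvalues) *ᵥ f) := by
      conv_lhs => rw [hB.spectral_theorem, Unitary.conjStarAlgAut_apply]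
      rw [← Matrix.mulVec_mulVec, ← Matrix.mulVec_mulVec, Matrix.dotProduct_mulVec, ← hsf,
        ← hf]
    have h2 : star f ⬝ᵥ (diagonal (RCLike.ofReal (K := ℂ) ∘ hB.eigenvalues) *ᵥ f)
        = ((∑ i, hB.eigenvalues i * Complex.normSq (f i) : ℝ) : ℂ) := by
      rw [show (RCLike.ofReal : ℝ → ℂ) = Complex.ofReal from rfl, dotProduct]
      push_cast
      congr 1
      ext i
      rw [Matrix.mulVec_diagonal]
      simp only [Function.comp_apply, Pi.star_apply, Complex.star_def]
      rw [show (starRingEnd ℂ) (f i) * ((hB.eigenvalues i : ℂ) * f i)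
          = (hB.eigenvalues i : ℂ) * ((starRingEnd ℂ) (f i) * f i) by ring,
        ← Complex.normSq_eq_conj_mul_self]
    have h3 : star f ⬝ᵥ f = star e ⬝ᵥ e := by
      rw [hsf, hf, ← Matrix.dotProduct_mulVec, Matrix.mulVec_mulVec, hUU, Matrix.one_mulVec]
    have hfsq : ((vecNorm e : ℝ) : ℂ) ^ 2 = ((∑ i, Complex.normSq (f i) : ℝ) : ℂ) := by
      rw [vecNorm_sq, ← h3, dotProduct]
      push_cast
      congr 1
      ext i
      simp only [Pi.star_apply, Complex.star_def]
      rw [← Complex.normSq_eq_conj_mul_self]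
    have hesq : vecNorm e ^ 2 = ∑ i, Complex.normSq (f i) := by exact_mod_cast hfsq
    have hAsq : vecNorm (A *ᵥ e) ^ 2 = ∑ i, hB.eigenvalues i * Complex.normSq (f i) := by
      have := (dot_B A e).symm.trans (h1.trans h2)
      exact_mod_cast this
    have hle : vecNorm (A *ᵥ e) ^ 2 ≤ (δ * vecNorm e) ^ 2 := by
      rw [hAsq, mul_pow, hesq, Finset.mul_sum]
      refine Finset.sum_le_sum fun i _ => ?_
      exact mul_le_mul_of_nonneg_right (key3 i) (Complex.normSq_nonneg _)
    exact le_of_pow_le_pow_left₀ two_ne_zero (mul_nonneg hδ (vecNorm_nonneg e)) hle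
  rw [matNorm]
  refine ContinuousLinearMap.opNorm_le_bound _ hδ fun x => ?_
  have hx : x = (WithLp.equiv 2 (Fin n → ℂ)).symm (WithLp.equiv 2 (Fin n → ℂ) x) :=
    ((WithLp.equiv 2 (Fin n → ℂ)).symm_apply_apply x).symm
  calc ‖(toEuclideanCLM (𝕜 := ℂ) A) x‖
      = vecNorm (A *ᵥ (WithLp.equiv 2 (Fin n → ℂ) x)) := by
        conv_lhs => rw [hx]
        rfl
    _ ≤ δ * vecNorm (WithLp.equiv 2 (Fin n → ℂ) x) := main _
    _ = δ * ‖x‖ := by rw [vecNorm, ← hx]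
end

section
/- Let ρ and ρ* be the norms on ℂⁿ defined by ρ(e) = ((1/|I|)∫_I |W^{1/p}(x)e|^p dx)^{1/p} and ρ*(e) = ((1/|I|)∫_I |W^{-1/p}(x)e|^{p'} dx)^{1/p'}, where W is a matrix weight on the cube I and 1 < p < ∞. If V and V' are positive definite matrices satisfying ρ(e) ≤ |V e| and ρ*(e) ≤ |V' e| for all e, then |V' V e| ≥ ρ*(V e) ≥ sup_{ρ(f) ≤ 1} |⟨e, f⟩| ≥ |e| for all e ∈ ℂⁿ; in particular |V' V e| ≥ |e|. -/
open MeasureTheory Matrix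
open scoped ComplexOrder

/-- A (half-open, axis-parallel) cube in `ℝ^d`. -/
def IsCube {d : ℕ} (I : Set (Fin d → ℝ)) : Prop :=
  ∃ (a : Fin d → ℝ) (ℓ : ℝ), 0 < ℓ ∧ I = Set.univ.pi fun i => Set.Ico (a i) (a i + ℓ)

/-- The average `(1/|I|) ∫_I g` of a scalar function over a set `I`. -/
noncomputable def avg {d : ℕ} (I : Set (Fin d → ℝ)) (g : (Fin d → ℝ) → ℝ) : ℝ :=
  (volume I).toReal⁻¹ * ∫ x in I, g x

/-- The (entrywise) average of a vector-valued function over a set `I`. -/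
noncomputable def vavg {d n : ℕ} (I : Set (Fin d → ℝ)) (f : (Fin d → ℝ) → Fin n → ℂ) :
    Fin n → ℂ :=
  fun i => (volume I).toReal⁻¹ • (∫ x in I, f x i)

/-- The (entrywise) average of a matrix-valued function over a set `I`. -/
noncomputable def mavg {d n : ℕ} (I : Set (Fin d → ℝ))
    (F : (Fin d → ℝ) → Matrix (Fin n) (Fin n) ℂ) : Matrix (Fin n) (Fin n) ℂ :=
  Matrix.of fun i j => (volume I).toReal⁻¹ • (∫ x in I, F x i j)

/-- auxiliary: membership in Lp from integrability of the p-th power. -/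
lemma memLp_of_integrable_rpow {α : Type*} [MeasurableSpace α] {μ : Measure α} {f : α → ℝ}
    (hf : ∀ x, 0 ≤ f x) {q : ℝ} (hq : 0 < q)
    (h : Integrable (fun x => f x ^ q) μ) : MemLp f (ENNReal.ofReal q) μ := by
  have hq0 : ENNReal.ofReal q ≠ 0 := by simp [ENNReal.ofReal_eq_zero, not_le, hq]
  have hfm : AEStronglyMeasurable f μ := by
    have h1 : AEMeasurable (fun x => f x ^ q) μ := h.aemeasurable
    have h2 : AEMeasurable (fun x => (f x ^ q) ^ q⁻¹) μ :=
      (Real.continuous_rpow_const (by positivity : (0:ℝ) ≤ q⁻¹)).measurable.comp_aemeasurable h1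
    have h3 : (fun x => (f x ^ q) ^ q⁻¹) = f := funext fun x => by
      rw [← Real.rpow_mul (hf x), mul_inv_cancel₀ hq.ne', Real.rpow_one]
    exact (h3 ▸ h2).aestronglyMeasurable
  have key : MemLp (fun x => ‖f x‖ ^ (ENNReal.ofReal q).toReal)
      (ENNReal.ofReal q / ENNReal.ofReal q) μ := by
    rw [ENNReal.div_self hq0 ENNReal.ofReal_ne_top, ENNReal.toReal_ofReal hq.le,
      memLp_one_iff_integrable]
    have : (fun x => ‖f x‖ ^ q) = fun x => f x ^ q := funext fun x => by
      rw [Real.norm_of_nonneg (hf x)]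
    rw [this]
    exact h
  exact (memLp_norm_rpow_iff hfm hq0 ENNReal.ofReal_ne_top).mp key

/-- auxiliary: the pairing identity. -/
lemma star_dot_aux {n : ℕ} (A B : Matrix (Fin n) (Fin n) ℂ) (h : Aᴴ * B = 1)
    (u v : Fin n → ℂ) : star (A.mulVec u) ⬝ᵥ B.mulVec v = star u ⬝ᵥ v := by
  rw [Matrix.star_mulVec, Matrix.dotProduct_mulVec, Matrix.vecMul_vecMul, h, Matrix.vecMul_one]

/-- auxiliary: Cauchy–Schwarz for the dot product. -/
lemma abs_dot_le_aux {n : ℕ} (a b : Fin n → ℂ) : ‖star a ⬝ᵥ b‖ ≤ vecNorm a * vecNorm b := by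
  have h := norm_inner_le_norm (𝕜 := ℂ) ((WithLp.equiv 2 (Fin n → ℂ)).symm a)
    ((WithLp.equiv 2 (Fin n → ℂ)).symm b)
  rw [dotProduct_comm]; exact h

lemma norm_star_dot_self {n : ℕ} (e : Fin n → ℂ) : ‖star e ⬝ᵥ e‖ = vecNorm e ^ 2 := by
  have h : star e ⬝ᵥ e = (inner ℂ ((WithLp.equiv 2 (Fin n → ℂ)).symm e)
      ((WithLp.equiv 2 (Fin n → ℂ)).symm e) : ℂ) :=
    by rw [dotProduct_comm]; rfl
  rw [h, inner_self_eq_norm_sq_to_K, norm_pow]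
  simp [vecNorm, RCLike.norm_ofReal, abs_norm]

/-- With `ρ(e) = ((1/|I|)∫_I |W^{1/p}(x)e|^p)^{1/p}` and
`ρ*(e) = ((1/|I|)∫_I |W^{-1/p}(x)e|^{p'})^{1/p'}`, if `V, V'` are positive definite with
`ρ(e) ≤ |V e|` and `ρ*(e) ≤ |V' e|` for all `e`, then
`|e| ≤ ρ*(V e) ≤ |V' V e|`; in particular `|V' V e| ≥ |e|`.
Here `Wp` is `W^{1/p}` and `Wm = Wp⁻¹` is `W^{-1/p}`. -/
theorem stmt3 {d n : ℕ} (p p' : ℝ) (hp : 1 < p) (hpp' : 1 / p + 1 / p' = 1)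
    (Wp Wm : (Fin d → ℝ) → Matrix (Fin n) (Fin n) ℂ)
    (hWp : ∀ x, (Wp x).PosDef) (hWm : ∀ x, Wm x = (Wp x)⁻¹)
    (I : Set (Fin d → ℝ)) (hI : IsCube I)
    (hintp : ∀ e : Fin n → ℂ, IntegrableOn (fun x => vecNorm ((Wp x).mulVec e) ^ p) I volume)
    (hintm : ∀ e : Fin n → ℂ, IntegrableOn (fun x => vecNorm ((Wm x).mulVec e) ^ p') I volume)
    (V V' : Matrix (Fin n) (Fin n) ℂ) (hV : V.PosDef) (hV' : V'.PosDef)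
    (hred : ∀ e : Fin n → ℂ,
      (avg I fun x => vecNorm ((Wp x).mulVec e) ^ p) ^ (1 / p) ≤ vecNorm (V.mulVec e))
    (hred' : ∀ e : Fin n → ℂ,
      (avg I fun x => vecNorm ((Wm x).mulVec e) ^ p') ^ (1 / p') ≤ vecNorm (V'.mulVec e)) :
    ∀ e : Fin n → ℂ,
      vecNorm e ≤ (avg I fun x => vecNorm ((Wm x).mulVec (V.mulVec e)) ^ p') ^ (1 / p') ∧
      (avg I fun x => vecNorm ((Wm x).mulVec (V.mulVec e)) ^ p') ^ (1 / p')
        ≤ vecNorm ((V' * V).mulVec e) ∧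
      vecNorm e ≤ vecNorm ((V' * V).mulVec e) := by
  intro e
  -- conjugate exponents
  have hpc : p.HolderConjugate p' := Real.holderConjugate_iff.mpr ⟨hp, by rw [← one_div, ← one_div]; exact hpp'⟩
  have hp0 : 0 < p := hpc.pos
  have hp'0 : 0 < p' := hpc.symm.pos
  -- volume facts
  obtain ⟨a, ℓ, hℓ, hIeq⟩ := hI
  have hImeas : MeasurableSet I := by
    rw [hIeq]; exact MeasurableSet.univ_pi fun i => measurableSet_Ico
  have hvol : volume I = ENNReal.ofReal ℓ ^ d := by
    rw [hIeq, volume_pi_pi]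
    simp [Real.volume_Ico]
  have hvolfin : volume I < ⊤ := by
    rw [hvol]; exact ENNReal.pow_lt_top ENNReal.ofReal_lt_top
  have hc : 0 < (volume I).toReal := by
    rw [hvol, ENNReal.toReal_pow, ENNReal.toReal_ofReal hℓ.le]
    positivity
  set c : ℝ := (volume I).toReal with hcdef
  -- matrix facts
  have hdetV : IsUnit V.det := isUnit_iff_ne_zero.mpr hV.det_pos.ne'
  have hVV : V * V⁻¹ = 1 := Matrix.mul_nonsing_inv _ hdetV
  have hVe : V.mulVec (V⁻¹.mulVec e) = e := by
    rw [Matrix.mulVec_mulVec, hVV, Matrix.one_mulVec]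
  set u : Fin n → ℂ := V.mulVec e with hu
  set f : Fin n → ℂ := V⁻¹.mulVec e with hf
  have hherm : ∀ x, (Wm x)ᴴ = Wm x := fun x => by
    rw [hWm]; exact ((hWp x).inv).isHermitian
  have hWmWp : ∀ x, (Wm x)ᴴ * Wp x = 1 := fun x => by
    rw [hherm, hWm]
    exact Matrix.nonsing_inv_mul _ (isUnit_iff_ne_zero.mpr (hWp x).det_pos.ne')
  have hee : star u ⬝ᵥ f = star e ⬝ᵥ e := by
    rw [hu, hf]
    exact star_dot_aux V V⁻¹ (by rw [show Vᴴ = V from hV.isHermitian]; exact hVV) e e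
  -- the two functions
  set fm : (Fin d → ℝ) → ℝ := fun x => vecNorm ((Wm x).mulVec u) with hfm
  set fp : (Fin d → ℝ) → ℝ := fun x => vecNorm ((Wp x).mulVec f) with hfp
  have hfm0 : ∀ x, 0 ≤ fm x := fun x => norm_nonneg _
  have hfp0 : ∀ x, 0 ≤ fp x := fun x => norm_nonneg _
  have hpoint : ∀ x, vecNorm e ^ 2 ≤ fm x * fp x := fun x => by
    have h1 : star u ⬝ᵥ f = star ((Wm x).mulVec u) ⬝ᵥ (Wp x).mulVec f :=
      (star_dot_aux _ _ (hWmWp x) u f).symm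
    calc vecNorm e ^ 2 = ‖star e ⬝ᵥ e‖ := (norm_star_dot_self e).symm
    _ = ‖star ((Wm x).mulVec u) ⬝ᵥ (Wp x).mulVec f‖ := by rw [← hee, h1]
    _ ≤ fm x * fp x := abs_dot_le_aux _ _
  -- Memℒp facts
  have hmm : MemLp fm (ENNReal.ofReal p') (volume.restrict I) :=
    memLp_of_integrable_rpow hfm0 hp'0 (hintm u)
  have hmp : MemLp fp (ENNReal.ofReal p) (volume.restrict I) :=
    memLp_of_integrable_rpow hfp0 hp0 (hintp f)
  -- product is integrable
  have hprod : IntegrableOn (fun x => fm x * fp x) I volume := by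
    rw [IntegrableOn, ← memLp_one_iff_integrable]
    have hpqr : (1 : ENNReal) / 1 = 1 / ENNReal.ofReal p' + 1 / ENNReal.ofReal p := by
      rw [show (1:ENNReal)/1 = 1 from by simp, one_div, one_div, ← ENNReal.ofReal_inv_of_pos hp'0,
        ← ENNReal.ofReal_inv_of_pos hp0, ← ENNReal.ofReal_add (by positivity) (by positivity)]
      rw [show p'⁻¹ + p⁻¹ = 1 by rw [← one_div, ← one_div, add_comm]; exact hpp']
      exact ENNReal.ofReal_one.symm
    haveI : ENNReal.HolderTriple (ENNReal.ofReal p') (ENNReal.ofReal p) 1 :=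
      ⟨by simpa [one_div] using hpqr.symm⟩
    have := hmp.smul (φ := fm) (r := 1) hmm
    exact this
  -- averages are nonnegative
  have havgm_nonneg : 0 ≤ avg I fun x => fm x ^ p' := by
    apply mul_nonneg (by positivity)
    exact setIntegral_nonneg hImeas fun x _ => Real.rpow_nonneg (hfm0 x) _
  have havgp_nonneg : 0 ≤ avg I fun x => fp x ^ p := by
    apply mul_nonneg (by positivity)
    exact setIntegral_nonneg hImeas fun x _ => Real.rpow_nonneg (hfp0 x) _
  -- step 1: |e|^2 ≤ avg (fm * fp)
  have hstep1 : vecNorm e ^ 2 ≤ avg I fun x => fm x * fp x := by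
    have h1 : vecNorm e ^ 2 * c ≤ ∫ x in I, fm x * fp x := by
      calc vecNorm e ^ 2 * c = ∫ _x in I, vecNorm e ^ 2 := by
            rw [setIntegral_const, smul_eq_mul, mul_comm, measureReal_def]
      _ ≤ ∫ x in I, fm x * fp x :=
          setIntegral_mono_on (integrableOn_const hvolfin.ne) hprod hImeas
            fun x _ => hpoint x
    have h2 : vecNorm e ^ 2 = c⁻¹ * (vecNorm e ^ 2 * c) := by
      field_simp
    rw [avg, ← hcdef, h2]
    exact mul_le_mul_of_nonneg_left h1 (by positivity)
  -- step 2: Hölder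
  have hstep2 : (avg I fun x => fm x * fp x) ≤
      (avg I fun x => fm x ^ p') ^ (1 / p') * (avg I fun x => fp x ^ p) ^ (1 / p) := by
    have hH : ∫ x in I, fm x * fp x ≤
        (∫ x in I, fm x ^ p') ^ (1 / p') * (∫ x in I, fp x ^ p) ^ (1 / p) :=
      integral_mul_le_Lp_mul_Lq_of_nonneg hpc.symm (Filter.Eventually.of_forall hfm0)
        (Filter.Eventually.of_forall hfp0) hmm hmp
    have hA : 0 ≤ ∫ x in I, fm x ^ p' :=
      setIntegral_nonneg hImeas fun x _ => Real.rpow_nonneg (hfm0 x) _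
    have hB : 0 ≤ ∫ x in I, fp x ^ p :=
      setIntegral_nonneg hImeas fun x _ => Real.rpow_nonneg (hfp0 x) _
    have hcsplit : c⁻¹ = (c⁻¹) ^ (1 / p') * (c⁻¹) ^ (1 / p) := by
      rw [← Real.rpow_add (by positivity), add_comm, hpp', Real.rpow_one]
    calc (avg I fun x => fm x * fp x)
        = c⁻¹ * ∫ x in I, fm x * fp x := rfl
      _ ≤ c⁻¹ * ((∫ x in I, fm x ^ p') ^ (1 / p') * (∫ x in I, fp x ^ p) ^ (1 / p)) :=
          mul_le_mul_of_nonneg_left hH (by positivity)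
      _ = (c⁻¹ ^ (1 / p') * (∫ x in I, fm x ^ p') ^ (1 / p')) *
            (c⁻¹ ^ (1 / p) * (∫ x in I, fp x ^ p) ^ (1 / p)) := by
          conv_lhs => rw [hcsplit]
          ring
      _ = (avg I fun x => fm x ^ p') ^ (1 / p') * (avg I fun x => fp x ^ p) ^ (1 / p) := by
          rw [avg, avg, ← hcdef, Real.mul_rpow (by positivity) hA,
            Real.mul_rpow (by positivity) hB]
  -- step 3
  have hstep3 : (avg I fun x => fp x ^ p) ^ (1 / p) ≤ vecNorm e := by
    have := hred f
    rwa [hVe] at this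
  -- combine
  have hmain : vecNorm e ^ 2 ≤ (avg I fun x => fm x ^ p') ^ (1 / p') * vecNorm e := by
    refine hstep1.trans (hstep2.trans ?_)
    exact mul_le_mul_of_nonneg_left hstep3 (Real.rpow_nonneg havgm_nonneg _)
  have hgoal1 : vecNorm e ≤ (avg I fun x => fm x ^ p') ^ (1 / p') := by
    rcases eq_or_lt_of_le (norm_nonneg ((WithLp.equiv 2 (Fin n → ℂ)).symm e)) with h0 | h0
    · rw [vecNorm, ← h0]
      exact Real.rpow_nonneg havgm_nonneg _
    · have h0' : 0 < vecNorm e := h0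
      have := hmain
      rw [sq] at this
      exact le_of_mul_le_mul_right this h0'
  have hgoal2 : (avg I fun x => fm x ^ p') ^ (1 / p') ≤ vecNorm ((V' * V).mulVec e) := by
    have := hred' u
    rwa [Matrix.mulVec_mulVec] at this
  exact ⟨hgoal1, hgoal2, hgoal1.trans hgoal2⟩
end
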